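/- (Lemma 1, convexity.) The indirect Wyner–Ziv rate-distortion function is jointly convex: for all (D_1,D_{s1}) and (D_2,D_{s2}) at which R_WZ is finite and all λ ∈ [0,1], R_WZ(λ·D_1 + (1−λ)·D_2, λ·D_{s1} + (1−λ)·D_{s2}) ≤ λ·R_WZ(D_1,D_{s1}) + (1−λ)·R_WZ(D_2,D_{s2}). -/

import Mathlib

open scoped BigOperators

namespace Stmt3

variable {𝒮 𝒳 𝒴 Sh Xh : Type}

/-- Marginal pmf of the observation `X` under the joint pmf `p` on `𝒮 × 𝒳 × 𝒴`. -/
noncomputable def pXm [Fintype 𝒮] [Fintype 𝒴] (p : 𝒮 × 𝒳 × 𝒴 → ℝ) : 𝒳 → ℝ :=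
  fun x => ∑ s, ∑ y, p (s, x, y)

/-- Marginal pmf of the side information `Y`. -/
noncomputable def pYm [Fintype 𝒮] [Fintype 𝒳] (p : 𝒮 × 𝒳 × 𝒴 → ℝ) : 𝒴 → ℝ :=
  fun y => ∑ s, ∑ x, p (s, x, y)

/-- Marginal pmf of the (ℕ-valued) auxiliary variable `U`, where `q x u = P(U = u | X = x)`. -/
noncomputable def pUm [Fintype 𝒮] [Fintype 𝒳] [Fintype 𝒴] (p : 𝒮 × 𝒳 × 𝒴 → ℝ)
    (q : 𝒳 → ℕ → ℝ) : ℕ → ℝ :=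
  fun u => ∑ x, pXm p x * q x u

/-- Joint pmf of `(Y, U)` under the law `P_{SXY}·P_{U|X}`. -/
noncomputable def pYUm [Fintype 𝒮] [Fintype 𝒳] (p : 𝒮 × 𝒳 × 𝒴 → ℝ)
    (q : 𝒳 → ℕ → ℝ) : 𝒴 → ℕ → ℝ :=
  fun y u => ∑ s, ∑ x, p (s, x, y) * q x u

/-- Base-2 Shannon mutual information `I(X;U)`. -/
noncomputable def IXU [Fintype 𝒮] [Fintype 𝒳] [Fintype 𝒴] (p : 𝒮 × 𝒳 × 𝒴 → ℝ)
    (q : 𝒳 → ℕ → ℝ) : ℝ :=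
  ∑ x, ∑' u, pXm p x * q x u * Real.logb 2 (q x u / pUm p q u)

/-- Base-2 Shannon mutual information `I(U;Y)`. -/
noncomputable def IUY [Fintype 𝒮] [Fintype 𝒳] [Fintype 𝒴] (p : 𝒮 × 𝒳 × 𝒴 → ℝ)
    (q : 𝒳 → ℕ → ℝ) : ℝ :=
  ∑ y, ∑' u, pYUm p q y u * Real.logb 2 (pYUm p q y u / (pYm p y * pUm p q u))

/-- Expected distortion `E[d(X, x̂(U,Y))]` on the observation. -/
noncomputable def EdX [Fintype 𝒮] [Fintype 𝒳] [Fintype 𝒴] (p : 𝒮 × 𝒳 × 𝒴 → ℝ)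
    (q : 𝒳 → ℕ → ℝ) (d : 𝒳 × Xh → ℝ) (xh : ℕ × 𝒴 → Xh) : ℝ :=
  ∑ s, ∑ x, ∑ y, ∑' u, p (s, x, y) * q x u * d (x, xh (u, y))

/-- Expected distortion `E[d_s(S, ŝ(U,Y))]` on the latent source. -/
noncomputable def EdS [Fintype 𝒮] [Fintype 𝒳] [Fintype 𝒴] (p : 𝒮 × 𝒳 × 𝒴 → ℝ)
    (q : 𝒳 → ℕ → ℝ) (ds : 𝒮 × Sh → ℝ) (sh : ℕ × 𝒴 → Sh) : ℝ :=
  ∑ s, ∑ x, ∑ y, ∑' u, p (s, x, y) * q x u * ds (s, sh (u, y))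

/-- `q` is a conditional pmf from `𝒳` to `ℕ`. -/
def IsCondPMF (q : 𝒳 → ℕ → ℝ) : Prop :=
  (∀ x u, 0 ≤ q x u) ∧ ∀ x, ∑' u, q x u = 1

/-- `(q, (x̂, ŝ))` is `(D, Ds)`-feasible. -/
def Feasible [Fintype 𝒮] [Fintype 𝒳] [Fintype 𝒴] (p : 𝒮 × 𝒳 × 𝒴 → ℝ)
    (d : 𝒳 × Xh → ℝ) (ds : 𝒮 × Sh → ℝ) (D Ds : ℝ)
    (q : 𝒳 → ℕ → ℝ) (xh : ℕ × 𝒴 → Xh) (sh : ℕ × 𝒴 → Sh) : Prop :=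
  IsCondPMF q ∧ EdX p q d xh ≤ D ∧ EdS p q ds sh ≤ Ds

/-- The indirect Wyner–Ziv rate-distortion function
`R_WZ(D, Ds) = inf { I(X;U) - I(U;Y) : (P_{U|X}, (x̂, ŝ)) is (D,Ds)-feasible }`,
with the infimum over the empty set equal to `+∞` (in `EReal`). -/
noncomputable def RWZ [Fintype 𝒮] [Fintype 𝒳] [Fintype 𝒴] (p : 𝒮 × 𝒳 × 𝒴 → ℝ)
    (d : 𝒳 × Xh → ℝ) (ds : 𝒮 × Sh → ℝ) (D Ds : ℝ) : EReal :=
  sInf { r : EReal | ∃ (q : 𝒳 → ℕ → ℝ) (xh : ℕ × 𝒴 → Xh) (sh : ℕ × 𝒴 → Sh),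
    Feasible p d ds D Ds q xh sh ∧ r = ((IXU p q - IUY p q : ℝ) : EReal) }


/-! Time sharing. Given schemes `(q₁, x̂₁, ŝ₁)` and `(q₂, x̂₂, ŝ₂)`, let the encoder use the first
with probability `λ`, sending `U = 2u`, and the second otherwise, sending `U = 2u + 1`; the
decoder reads off the scheme from the parity of `U`. The two schemes live on disjoint halves of
the alphabet of `U`, so the laws of `U` and `(Y, U)` restricted to each half are the laws of the
original schemes scaled by `λ` and `1 - λ`. Hence both distortions and both mutual informations,
and so the rate `I(X;U) - I(U;Y)`, are exactly the convex combinations of those of the two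
schemes. Applied to near-optimal schemes at `(D₁, Ds₁)` and `(D₂, Ds₂)`, this gives convexity. -/

lemma abs_mul_log_div_le {a b C : ℝ} (ha : 0 ≤ a) (hb : 0 ≤ b) (hab : a ≤ C * b) :
    |a * Real.log (a / b)| ≤ a * |Real.log C| + b := by
  rcases ha.eq_or_lt with rfl | ha
  · simpa using hb
  have hb : 0 < b := hb.lt_of_ne <| by rintro rfl; simp at hab; linarith
  have hC : 0 < C := by by_contra! hC; nlinarith
  rw [abs_le]
  constructor
  · have hinv : a * Real.log (b / a) ≤ b - a := by
      have := mul_le_mul_of_nonneg_left (Real.log_le_sub_one_of_pos (div_pos hb ha)) ha.le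
      rwa [mul_sub, mul_div_cancel₀ _ ha.ne', mul_one] at this
    rw [← inv_div, Real.log_inv]
    nlinarith [abs_nonneg (Real.log C)]
  · have hlog : Real.log (a / b) ≤ Real.log C :=
      Real.log_le_log (div_pos ha hb) ((div_le_iff₀ hb).2 hab)
    nlinarith [le_abs_self (Real.log C)]

lemma summable_mul_log_div {ι : Type*} {a b : ι → ℝ} {C : ℝ} (ha : ∀ i, 0 ≤ a i)
    (hb : ∀ i, 0 ≤ b i) (hab : ∀ i, a i ≤ C * b i) (hsa : Summable a) (hsb : Summable b) :
    Summable fun i => a i * Real.log (a i / b i) :=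
  Summable.of_norm_bounded ((hsa.mul_right _).add hsb) fun i =>
    abs_mul_log_div_le (ha i) (hb i) (hab i)

lemma summable_mul_logb_div {ι : Type*} {a b : ι → ℝ} {C : ℝ} (β : ℝ) (ha : ∀ i, 0 ≤ a i)
    (hb : ∀ i, 0 ≤ b i) (hab : ∀ i, a i ≤ C * b i) (hsa : Summable a) (hsb : Summable b) :
    Summable fun i => a i * Real.logb β (a i / b i) := by
  simpa only [Real.logb, mul_div_assoc] using
    (summable_mul_log_div ha hb hab hsa hsb).div_const (Real.log β)

lemma summable_mul_comp_of_finite {κ ι : Type*} [Finite ι] {r : κ → ℝ} (hr : Summable r)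
    (h : ι → ℝ) (g : κ → ι) : Summable fun k => r k * h (g k) := by
  obtain ⟨M, hM⟩ := Finite.bddAbove_range fun i => |h i|
  refine Summable.of_norm_bounded (hr.abs.mul_right M) fun k => ?_
  rw [Real.norm_eq_abs, abs_mul]
  exact mul_le_mul_of_nonneg_left (hM ⟨g k, rfl⟩) (abs_nonneg _)

lemma mul_mul_logb_mul_div_mul (β c a b : ℝ) :
    c * a * Real.logb β (c * a / (c * b)) = c * (a * Real.logb β (a / b)) := by
  rcases eq_or_ne c 0 with rfl | hc
  · simp
  · rw [mul_div_mul_left a b hc, mul_assoc]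

lemma tsum_eq_mix_of_even_odd {F F₁ F₂ : ℕ → ℝ} (lam : ℝ)
    (heven : ∀ n, F (2 * n) = lam * F₁ n) (hodd : ∀ n, F (2 * n + 1) = (1 - lam) * F₂ n)
    (h₁ : Summable F₁) (h₂ : Summable F₂) :
    ∑' n, F n = lam * ∑' n, F₁ n + (1 - lam) * ∑' n, F₂ n := by
  rw [← tsum_even_add_odd (by simpa only [heven] using h₁.mul_left lam)
      (by simpa only [hodd] using h₂.mul_left (1 - lam)),
    tsum_congr heven, tsum_congr hodd, tsum_mul_left, tsum_mul_left]

section Marginals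

variable {q : 𝒳 → ℕ → ℝ}

lemma IsCondPMF.summable (hq : IsCondPMF q) (x : 𝒳) : Summable (q x) := by
  by_contra h
  simpa [tsum_eq_zero_of_not_summable h] using hq.2 x

lemma IsCondPMF.le_one (hq : IsCondPMF q) (x : 𝒳) (n : ℕ) : q x n ≤ 1 :=
  hq.2 x ▸ (hq.summable x).le_tsum n fun m _ => hq.1 x m

lemma pXm_nonneg [Fintype 𝒮] [Fintype 𝒴] {p : 𝒮 × 𝒳 × 𝒴 → ℝ} (hp0 : ∀ z, 0 ≤ p z) (x : 𝒳) :
    0 ≤ pXm p x :=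
  Finset.sum_nonneg fun _ _ => Finset.sum_nonneg fun _ _ => hp0 _

variable [Fintype 𝒮] [Fintype 𝒳] {p : 𝒮 × 𝒳 × 𝒴 → ℝ}

lemma pYm_nonneg (hp0 : ∀ z, 0 ≤ p z) (y : 𝒴) : 0 ≤ pYm p y :=
  Finset.sum_nonneg fun _ _ => Finset.sum_nonneg fun _ _ => hp0 _

lemma pYUm_nonneg (hp0 : ∀ z, 0 ≤ p z) (hq : IsCondPMF q) (y : 𝒴) (n : ℕ) :
    0 ≤ pYUm p q y n :=
  Finset.sum_nonneg fun _ _ => Finset.sum_nonneg fun x _ => mul_nonneg (hp0 _) (hq.1 x n)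

lemma pYUm_le_pYm (hp0 : ∀ z, 0 ≤ p z) (hq : IsCondPMF q) (y : 𝒴) (n : ℕ) :
    pYUm p q y n ≤ pYm p y :=
  Finset.sum_le_sum fun _ _ => Finset.sum_le_sum fun x _ =>
    mul_le_of_le_one_right (hp0 _) (hq.le_one x n)

lemma summable_pYUm (hq : IsCondPMF q) (y : 𝒴) : Summable (pYUm p q y) :=
  summable_sum fun _ _ => summable_sum fun x _ => (hq.summable x).mul_left _

variable [Fintype 𝒴]

lemma pUm_nonneg (hp0 : ∀ z, 0 ≤ p z) (hq : IsCondPMF q) (n : ℕ) : 0 ≤ pUm p q n :=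
  Finset.sum_nonneg fun x _ => mul_nonneg (pXm_nonneg hp0 x) (hq.1 x n)

lemma mul_le_pUm (hp0 : ∀ z, 0 ≤ p z) (hq : IsCondPMF q) (x : 𝒳) (n : ℕ) :
    pXm p x * q x n ≤ pUm p q n :=
  Finset.single_le_sum (f := fun x' => pXm p x' * q x' n)
    (fun x' _ => mul_nonneg (pXm_nonneg hp0 x') (hq.1 x' n)) (Finset.mem_univ x)

lemma pYUm_le_pUm (hp0 : ∀ z, 0 ≤ p z) (hq : IsCondPMF q) (y : 𝒴) (n : ℕ) :
    pYUm p q y n ≤ pUm p q n := by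
  rw [pYUm, Finset.sum_comm, pUm]
  refine Finset.sum_le_sum fun x _ => ?_
  rw [← Finset.sum_mul, pXm]
  refine mul_le_mul_of_nonneg_right (Finset.sum_le_sum fun s _ => ?_) (hq.1 x n)
  exact Finset.single_le_sum (f := fun y' => p (s, x, y')) (fun _ _ => hp0 _) (Finset.mem_univ y)

lemma summable_pUm (hq : IsCondPMF q) : Summable (pUm p q) :=
  summable_sum fun x _ => (hq.summable x).mul_left _

lemma summable_IXU_summand (hp0 : ∀ z, 0 ≤ p z) (hq : IsCondPMF q) (x : 𝒳) :
    Summable fun n => pXm p x * q x n * Real.logb 2 (q x n / pUm p q n) := by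
  rcases (pXm_nonneg hp0 x).eq_or_lt with hx | hx
  · simp [← hx]
  simp_rw [mul_assoc]
  refine (summable_mul_logb_div 2 (C := (pXm p x)⁻¹) (hq.1 x) (pUm_nonneg hp0 hq) (fun n => ?_)
    (hq.summable x) (summable_pUm hq)).mul_left _
  rw [inv_mul_eq_div, le_div_iff₀ hx, mul_comm]
  exact mul_le_pUm hp0 hq x n

lemma summable_IUY_summand (hp0 : ∀ z, 0 ≤ p z) (hq : IsCondPMF q) (y : 𝒴) :
    Summable fun n => pYUm p q y n * Real.logb 2 (pYUm p q y n / (pYm p y * pUm p q n)) := by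
  refine summable_mul_logb_div 2 (C := (pYm p y)⁻¹) (pYUm_nonneg hp0 hq y)
    (fun n => mul_nonneg (pYm_nonneg hp0 y) (pUm_nonneg hp0 hq n)) (fun n => ?_) (summable_pYUm hq y) ((summable_pUm hq).mul_left _)
  rcases eq_or_ne (pYm p y) 0 with hy | hy
  · simpa [hy] using pYUm_le_pYm hp0 hq y n
  · rw [inv_mul_cancel_left₀ hy]
    exact pYUm_le_pUm hp0 hq y n

end Marginals

def evenOdd {α : Type*} (f g : ℕ → α) (n : ℕ) : α :=
  if n % 2 = 0 then f (n / 2) else g (n / 2)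

@[simp]
lemma evenOdd_two_mul {α : Type*} (f g : ℕ → α) (n : ℕ) : evenOdd f g (2 * n) = f n := by
  simp [evenOdd]

@[simp]
lemma evenOdd_two_mul_add_one {α : Type*} (f g : ℕ → α) (n : ℕ) :
    evenOdd f g (2 * n + 1) = g n := by
  simp [evenOdd, Nat.mul_add_div]

def timeShare (lam : ℝ) (q₁ q₂ : 𝒳 → ℕ → ℝ) : 𝒳 → ℕ → ℝ :=
  fun x => evenOdd (fun u => lam * q₁ x u) (fun u => (1 - lam) * q₂ x u)

def timeShareMap {α : Type*} (f₁ f₂ : ℕ × 𝒴 → α) : ℕ × 𝒴 → α :=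
  fun z => evenOdd (fun u => f₁ (u, z.2)) (fun u => f₂ (u, z.2)) z.1

section TimeShare

variable {lam : ℝ} {q₁ q₂ : 𝒳 → ℕ → ℝ}

@[simp]
lemma timeShare_two_mul (x : 𝒳) (n : ℕ) : timeShare lam q₁ q₂ x (2 * n) = lam * q₁ x n :=
  evenOdd_two_mul _ _ n

@[simp]
lemma timeShare_two_mul_add_one (x : 𝒳) (n : ℕ) :
    timeShare lam q₁ q₂ x (2 * n + 1) = (1 - lam) * q₂ x n :=
  evenOdd_two_mul_add_one _ _ n

@[simp]
lemma timeShareMap_two_mul {α : Type*} (f₁ f₂ : ℕ × 𝒴 → α) (n : ℕ) (y : 𝒴) :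
    timeShareMap f₁ f₂ (2 * n, y) = f₁ (n, y) :=
  evenOdd_two_mul _ _ n

@[simp]
lemma timeShareMap_two_mul_add_one {α : Type*} (f₁ f₂ : ℕ × 𝒴 → α) (n : ℕ) (y : 𝒴) :
    timeShareMap f₁ f₂ (2 * n + 1, y) = f₂ (n, y) :=
  evenOdd_two_mul_add_one _ _ n

lemma isCondPMF_timeShare (hlam0 : 0 ≤ lam) (hlam1 : lam ≤ 1) (hq₁ : IsCondPMF q₁)
    (hq₂ : IsCondPMF q₂) : IsCondPMF (timeShare lam q₁ q₂) := by
  refine ⟨fun x n => ?_, fun x => ?_⟩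
  · obtain ⟨k, rfl | rfl⟩ := Nat.even_or_odd' n
    · simpa using mul_nonneg hlam0 (hq₁.1 x k)
    · simpa using mul_nonneg (sub_nonneg.2 hlam1) (hq₂.1 x k)
  · rw [tsum_eq_mix_of_even_odd lam (timeShare_two_mul x) (timeShare_two_mul_add_one x)
      (hq₁.summable x) (hq₂.summable x), hq₁.2 x, hq₂.2 x]
    ring

variable [Fintype 𝒮] [Fintype 𝒳] {p : 𝒮 × 𝒳 × 𝒴 → ℝ}

@[simp]
lemma pYUm_timeShare_two_mul (y : 𝒴) (n : ℕ) :
    pYUm p (timeShare lam q₁ q₂) y (2 * n) = lam * pYUm p q₁ y n := by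
  simp [pYUm, Finset.mul_sum, mul_left_comm]

@[simp]
lemma pYUm_timeShare_two_mul_add_one (y : 𝒴) (n : ℕ) :
    pYUm p (timeShare lam q₁ q₂) y (2 * n + 1) = (1 - lam) * pYUm p q₂ y n := by
  simp [pYUm, Finset.mul_sum, mul_left_comm]

variable [Fintype 𝒴]

@[simp]
lemma pUm_timeShare_two_mul (n : ℕ) :
    pUm p (timeShare lam q₁ q₂) (2 * n) = lam * pUm p q₁ n := by
  simp [pUm, Finset.mul_sum, mul_left_comm]

@[simp]
lemma pUm_timeShare_two_mul_add_one (n : ℕ) :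
    pUm p (timeShare lam q₁ q₂) (2 * n + 1) = (1 - lam) * pUm p q₂ n := by
  simp [pUm, Finset.mul_sum, mul_left_comm]

lemma EdX_timeShare [Finite Xh] (hq₁ : IsCondPMF q₁) (hq₂ : IsCondPMF q₂) (d : 𝒳 × Xh → ℝ)
    (xh₁ xh₂ : ℕ × 𝒴 → Xh) :
    EdX p (timeShare lam q₁ q₂) d (timeShareMap xh₁ xh₂) =
      lam * EdX p q₁ d xh₁ + (1 - lam) * EdX p q₂ d xh₂ := by
  have inner (s : 𝒮) (x : 𝒳) (y : 𝒴) :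
      ∑' n, p (s, x, y) * timeShare lam q₁ q₂ x n * d (x, timeShareMap xh₁ xh₂ (n, y)) =
        lam * ∑' n, p (s, x, y) * q₁ x n * d (x, xh₁ (n, y)) +
          (1 - lam) * ∑' n, p (s, x, y) * q₂ x n * d (x, xh₂ (n, y)) :=
    tsum_eq_mix_of_even_odd lam (fun n => by simp; ring) (fun n => by simp; ring)
      (summable_mul_comp_of_finite ((hq₁.summable x).mul_left _) (fun i => d (x, i))
        fun n => xh₁ (n, y))
      (summable_mul_comp_of_finite ((hq₂.summable x).mul_left _) (fun i => d (x, i))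
        fun n => xh₂ (n, y))
  simp only [EdX, inner, Finset.mul_sum, Finset.sum_add_distrib]

lemma EdS_timeShare [Finite Sh] (hq₁ : IsCondPMF q₁) (hq₂ : IsCondPMF q₂) (ds : 𝒮 × Sh → ℝ)
    (sh₁ sh₂ : ℕ × 𝒴 → Sh) :
    EdS p (timeShare lam q₁ q₂) ds (timeShareMap sh₁ sh₂) =
      lam * EdS p q₁ ds sh₁ + (1 - lam) * EdS p q₂ ds sh₂ := by
  have inner (s : 𝒮) (x : 𝒳) (y : 𝒴) :
      ∑' n, p (s, x, y) * timeShare lam q₁ q₂ x n * ds (s, timeShareMap sh₁ sh₂ (n, y)) =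
        lam * ∑' n, p (s, x, y) * q₁ x n * ds (s, sh₁ (n, y)) +
          (1 - lam) * ∑' n, p (s, x, y) * q₂ x n * ds (s, sh₂ (n, y)) :=
    tsum_eq_mix_of_even_odd lam (fun n => by simp; ring) (fun n => by simp; ring)
      (summable_mul_comp_of_finite ((hq₁.summable x).mul_left _) (fun i => ds (s, i))
        fun n => sh₁ (n, y))
      (summable_mul_comp_of_finite ((hq₂.summable x).mul_left _) (fun i => ds (s, i))
        fun n => sh₂ (n, y))
  simp only [EdS, inner, Finset.mul_sum, Finset.sum_add_distrib]

lemma IXU_timeShare (hp0 : ∀ z, 0 ≤ p z) (hq₁ : IsCondPMF q₁) (hq₂ : IsCondPMF q₂) :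
    IXU p (timeShare lam q₁ q₂) = lam * IXU p q₁ + (1 - lam) * IXU p q₂ := by
  have inner (x : 𝒳) :
      ∑' n, pXm p x * timeShare lam q₁ q₂ x n *
          Real.logb 2 (timeShare lam q₁ q₂ x n / pUm p (timeShare lam q₁ q₂) n) =
        lam * ∑' n, pXm p x * q₁ x n * Real.logb 2 (q₁ x n / pUm p q₁ n) +
          (1 - lam) * ∑' n, pXm p x * q₂ x n * Real.logb 2 (q₂ x n / pUm p q₂ n) := by
    refine tsum_eq_mix_of_even_odd lam (fun n => ?_) (fun n => ?_)
      (summable_IXU_summand hp0 hq₁ x) (summable_IXU_summand hp0 hq₂ x)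
    all_goals
      simp only [timeShare_two_mul, timeShare_two_mul_add_one, pUm_timeShare_two_mul,
        pUm_timeShare_two_mul_add_one]
      rw [mul_assoc, mul_mul_logb_mul_div_mul]
      ring
  simp only [IXU, inner, Finset.mul_sum, Finset.sum_add_distrib]

lemma IUY_timeShare (hp0 : ∀ z, 0 ≤ p z) (hq₁ : IsCondPMF q₁) (hq₂ : IsCondPMF q₂) :
    IUY p (timeShare lam q₁ q₂) = lam * IUY p q₁ + (1 - lam) * IUY p q₂ := by
  have inner (y : 𝒴) :
      ∑' n, pYUm p (timeShare lam q₁ q₂) y n * Real.logb 2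
          (pYUm p (timeShare lam q₁ q₂) y n / (pYm p y * pUm p (timeShare lam q₁ q₂) n)) =
        lam * ∑' n, pYUm p q₁ y n * Real.logb 2 (pYUm p q₁ y n / (pYm p y * pUm p q₁ n)) +
          (1 - lam) * ∑' n, pYUm p q₂ y n *
            Real.logb 2 (pYUm p q₂ y n / (pYm p y * pUm p q₂ n)) := by
    refine tsum_eq_mix_of_even_odd lam (fun n => ?_) (fun n => ?_)
      (summable_IUY_summand hp0 hq₁ y) (summable_IUY_summand hp0 hq₂ y)
    all_goals
      simp only [pYUm_timeShare_two_mul, pYUm_timeShare_two_mul_add_one, pUm_timeShare_two_mul,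
        pUm_timeShare_two_mul_add_one]
      rw [mul_left_comm (pYm p y), mul_mul_logb_mul_div_mul]
  simp only [IUY, inner, Finset.mul_sum, Finset.sum_add_distrib]

lemma feasible_timeShare [Finite Xh] [Finite Sh] (hlam0 : 0 ≤ lam) (hlam1 : lam ≤ 1)
    {d : 𝒳 × Xh → ℝ} {ds : 𝒮 × Sh → ℝ} {D₁ D₂ Ds₁ Ds₂ : ℝ}
    {xh₁ xh₂ : ℕ × 𝒴 → Xh} {sh₁ sh₂ : ℕ × 𝒴 → Sh}
    (h₁ : Feasible p d ds D₁ Ds₁ q₁ xh₁ sh₁) (h₂ : Feasible p d ds D₂ Ds₂ q₂ xh₂ sh₂) :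
    Feasible p d ds (lam * D₁ + (1 - lam) * D₂) (lam * Ds₁ + (1 - lam) * Ds₂)
      (timeShare lam q₁ q₂) (timeShareMap xh₁ xh₂) (timeShareMap sh₁ sh₂) := by
  obtain ⟨hq₁, hX₁, hS₁⟩ := h₁
  obtain ⟨hq₂, hX₂, hS₂⟩ := h₂
  have hlam1' : 0 ≤ 1 - lam := sub_nonneg.2 hlam1
  refine ⟨isCondPMF_timeShare hlam0 hlam1 hq₁ hq₂, ?_, ?_⟩
  · rw [EdX_timeShare hq₁ hq₂]
    gcongr
  · rw [EdS_timeShare hq₁ hq₂]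
    gcongr

lemma rate_timeShare (hp0 : ∀ z, 0 ≤ p z) (hq₁ : IsCondPMF q₁) (hq₂ : IsCondPMF q₂) :
    IXU p (timeShare lam q₁ q₂) - IUY p (timeShare lam q₁ q₂) =
      lam * (IXU p q₁ - IUY p q₁) + (1 - lam) * (IXU p q₂ - IUY p q₂) := by
  rw [IXU_timeShare hp0 hq₁ hq₂, IUY_timeShare hp0 hq₁ hq₂]
  ring

end TimeShare

section RateDistortion

variable [Fintype 𝒮] [Fintype 𝒳] [Fintype 𝒴] {p : 𝒮 × 𝒳 × 𝒴 → ℝ} {d : 𝒳 × Xh → ℝ}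
  {ds : 𝒮 × Sh → ℝ} {D Ds : ℝ}

lemma RWZ_le_of_feasible {q : 𝒳 → ℕ → ℝ} {xh : ℕ × 𝒴 → Xh} {sh : ℕ × 𝒴 → Sh}
    (h : Feasible p d ds D Ds q xh sh) : RWZ p d ds D Ds ≤ ((IXU p q - IUY p q : ℝ) : EReal) :=
  sInf_le ⟨q, xh, sh, h, rfl⟩

lemma exists_feasible_of_RWZ_lt {t : EReal} (h : RWZ p d ds D Ds < t) :
    ∃ (q : 𝒳 → ℕ → ℝ) (xh : ℕ × 𝒴 → Xh) (sh : ℕ × 𝒴 → Sh),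
      Feasible p d ds D Ds q xh sh ∧ ((IXU p q - IUY p q : ℝ) : EReal) < t := by
  obtain ⟨_, ⟨q, xh, sh, hf, rfl⟩, hlt⟩ := sInf_lt_iff.1 h
  exact ⟨q, xh, sh, hf, hlt⟩

end RateDistortion

theorem RWZ_convex_general
    [Fintype 𝒮] [Fintype 𝒳] [Fintype 𝒴] [Fintype Sh] [Fintype Xh]
    (p : 𝒮 × 𝒳 × 𝒴 → ℝ) (hp0 : ∀ z, 0 ≤ p z)
    (d : 𝒳 × Xh → ℝ)
    (ds : 𝒮 × Sh → ℝ)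
    (D₁ D₂ Ds₁ Ds₂ : ℝ) (r₁ r₂ : ℝ)
    (h₁ : RWZ p d ds D₁ Ds₁ = ((r₁ : ℝ) : EReal))
    (h₂ : RWZ p d ds D₂ Ds₂ = ((r₂ : ℝ) : EReal))
    (lam : ℝ) (hlam0 : 0 ≤ lam) (hlam1 : lam ≤ 1) :
    RWZ p d ds (lam * D₁ + (1 - lam) * D₂) (lam * Ds₁ + (1 - lam) * Ds₂) ≤
      ((lam * r₁ + (1 - lam) * r₂ : ℝ) : EReal) := by
  refine EReal.le_of_forall_lt_iff_le.1 fun z hz => ?_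
  set ε := z - (lam * r₁ + (1 - lam) * r₂)
  have hε : 0 < ε := sub_pos.2 (EReal.coe_lt_coe_iff.1 hz)
  obtain ⟨q₁, xh₁, sh₁, hf₁, hR₁⟩ := exists_feasible_of_RWZ_lt
    (h₁.trans_lt (EReal.coe_lt_coe_iff.2 (lt_add_of_pos_right r₁ hε)))
  obtain ⟨q₂, xh₂, sh₂, hf₂, hR₂⟩ := exists_feasible_of_RWZ_lt
    (h₂.trans_lt (EReal.coe_lt_coe_iff.2 (lt_add_of_pos_right r₂ hε)))
  rw [EReal.coe_lt_coe_iff] at hR₁ hR₂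
  calc _ ≤ ((IXU p (timeShare lam q₁ q₂) - IUY p (timeShare lam q₁ q₂) : ℝ) : EReal) :=
        RWZ_le_of_feasible (feasible_timeShare hlam0 hlam1 hf₁ hf₂)
    _ ≤ (z : EReal) := by
      rw [rate_timeShare hp0 hf₁.1 hf₂.1, EReal.coe_le_coe_iff]
      nlinarith [mul_le_mul_of_nonneg_left hR₁.le hlam0,
        mul_le_mul_of_nonneg_left hR₂.le (sub_nonneg.2 hlam1)]

/-- **Lemma 1 (convexity).** The indirect Wyner–Ziv rate-distortion function is jointly
convex: for all `(D₁, Ds₁)`, `(D₂, Ds₂)` at which it is finite (with finite real values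
`r₁`, `r₂`) and all `λ ∈ [0,1]`,
`R_WZ(λ·D₁ + (1-λ)·D₂, λ·Ds₁ + (1-λ)·Ds₂) ≤ λ·r₁ + (1-λ)·r₂`. -/
theorem RWZ_convex
    [Fintype 𝒮] [Fintype 𝒳] [Fintype 𝒴] [Fintype Sh] [Fintype Xh]
    [Nonempty 𝒮] [Nonempty 𝒳] [Nonempty 𝒴] [Nonempty Sh] [Nonempty Xh]
    (p : 𝒮 × 𝒳 × 𝒴 → ℝ) (hp0 : ∀ z, 0 ≤ p z) (hp1 : ∑ z : 𝒮 × 𝒳 × 𝒴, p z = 1)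
    (d : 𝒳 × Xh → ℝ) (hd0 : ∀ z, 0 ≤ d z)
    (ds : 𝒮 × Sh → ℝ) (hds0 : ∀ z, 0 ≤ ds z)
    (D₁ D₂ Ds₁ Ds₂ : ℝ) (r₁ r₂ : ℝ)
    (h₁ : RWZ p d ds D₁ Ds₁ = ((r₁ : ℝ) : EReal))
    (h₂ : RWZ p d ds D₂ Ds₂ = ((r₂ : ℝ) : EReal))
    (lam : ℝ) (hlam0 : 0 ≤ lam) (hlam1 : lam ≤ 1) :
    RWZ p d ds (lam * D₁ + (1 - lam) * D₂) (lam * Ds₁ + (1 - lam) * Ds₂) ≤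
      ((lam * r₁ + (1 - lam) * r₂ : ℝ) : EReal) :=
  RWZ_convex_general p hp0 d ds D₁ D₂ Ds₁ Ds₂ r₁ r₂ h₁ h₂ lam hlam0 hlam1

end Stmt3
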